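/- Let E be an isotropic subspace of V × V*, and set U = pr_V E and U′ = pr_V E^⊥. Then dim E = dim U + (dim V − dim U′) and dim E^⊥ = dim U′ + (dim V − dim U); equivalently, dim E = dim U + dim ann U′ and dim E^⊥ = dim U′ + dim ann U, where for a subspace W ⊆ V, ann W = {α ∈ V* : α(v) = 0 for all v ∈ W}. -/

import Mathlib

open Module LinearMap

/-- The pairing metric `g((X,α),(Y,β)) = (1/2)(α(Y) + β(X))` on `V × V*`. -/
noncomputable def bigG (V : Type*) [AddCommGroup V] [Module ℝ V] :
    LinearMap.BilinForm ℝ (V × Module.Dual ℝ V) :=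
  LinearMap.mk₂ ℝ (fun p q => (1 / 2 : ℝ) * (p.2 q.1 + q.2 p.1))
    (fun p p' q => by simp; ring)
    (fun c p q => by simp; ring)
    (fun p q q' => by simp; ring)
    (fun c p q => by simp; ring)

/-- The `g`-orthogonal complement of a subspace of `V × V*`. -/
noncomputable def gOrth {V : Type*} [AddCommGroup V] [Module ℝ V]
    (E : Submodule ℝ (V × Module.Dual ℝ V)) : Submodule ℝ (V × Module.Dual ℝ V) :=
  LinearMap.BilinForm.orthogonal (bigG V) E

/-!
Rank–nullity for `pr_V` restricted to a subspace `F ⊆ V × V*` gives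
`dim F = dim pr_V F + dim {α | (0, α) ∈ F}`. A vector `(0, α)` is `g`-orthogonal to `F` exactly
when `α` annihilates `pr_V F`, so `{α | (0, α) ∈ E^⊥} = ann U`; since `g` is nondegenerate,
`E = E^⊥⊥` and likewise `{α | (0, α) ∈ E} = ann U′`. Finally `dim ann W = dim V - dim W`.
-/

theorem Submodule.finrank_map_fst_add_finrank_comap_inr {K M N : Type*} [DivisionRing K]
    [AddCommGroup M] [Module K M] [AddCommGroup N] [Module K N]
    (F : Submodule K (M × N)) [FiniteDimensional K F] :
    finrank K (F.map (LinearMap.fst K M N)) + finrank K (F.comap (LinearMap.inr K M N)) =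
      finrank K F := by
  set f := (LinearMap.fst K M N).domRestrict F
  have hker : finrank K (LinearMap.ker f) = finrank K (F.comap (LinearMap.inr K M N)) :=
    calc finrank K (LinearMap.ker f)
        _ = finrank K (F ⊓ LinearMap.ker (LinearMap.fst K M N) : Submodule K (M × N)) := by
          rw [LinearMap.ker_domRestrict, ← finrank_map_subtype_eq, map_comap_subtype]
        _ = finrank K ((F.comap (LinearMap.inr K M N)).map (LinearMap.inr K M N)) := by
          rw [map_comap_eq, LinearMap.range_inr, inf_comm]
        _ = finrank K (F.comap (LinearMap.inr K M N)) :=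
          (equivMapOfInjective _ LinearMap.inr_injective _).finrank_eq.symm
  rw [← LinearMap.range_domRestrict, ← hker]
  exact LinearMap.finrank_range_add_finrank_ker f

section PairingMetric

variable {V : Type*} [AddCommGroup V] [Module ℝ V]

@[simp]
theorem bigG_apply (p q : V × Dual ℝ V) : bigG V p q = 1 / 2 * (p.2 q.1 + q.2 p.1) := rfl

theorem bigG_isRefl : (bigG V).IsRefl := by
  intro p q h
  simp only [bigG_apply] at h ⊢
  linarith

theorem bigG_nondegenerate [FiniteDimensional ℝ V] : (bigG V).Nondegenerate := by
  refine (IsRefl.nondegenerate_iff_separatingLeft fun p q => bigG_isRefl p q).2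
    fun p hp => Prod.ext ?_ ?_
  · refine (forall_dual_apply_eq_zero_iff ℝ p.1).1 fun φ => ?_
    simpa using hp (0, φ)
  · ext v
    simpa using hp (v, 0)

theorem gOrth_gOrth [FiniteDimensional ℝ V] (E : Submodule ℝ (V × Dual ℝ V)) :
    gOrth (gOrth E) = E :=
  BilinForm.orthogonal_orthogonal bigG_nondegenerate bigG_isRefl E

theorem comap_inr_gOrth (F : Submodule ℝ (V × Dual ℝ V)) :
    (gOrth F).comap (inr ℝ V (Dual ℝ V)) =
      (F.map (fst ℝ V (Dual ℝ V))).dualAnnihilator := by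
  ext α
  simp only [Submodule.mem_comap, coe_inr, gOrth, BilinForm.mem_orthogonal_iff,
    Submodule.mem_dualAnnihilator, Submodule.mem_map, fst_apply, forall_exists_index, and_imp]
  constructor
  · rintro h _ p hp rfl
    simpa using h p hp
  · intro h p hp
    simp [h p.1 p hp rfl]

theorem finrank_gOrth [FiniteDimensional ℝ V] (F : Submodule ℝ (V × Dual ℝ V)) :
    finrank ℝ (gOrth F) = finrank ℝ ((gOrth F).map (fst ℝ V (Dual ℝ V)))
      + finrank ℝ (F.map (fst ℝ V (Dual ℝ V))).dualAnnihilator := by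
  rw [← comap_inr_gOrth, Submodule.finrank_map_fst_add_finrank_comap_inr]

end PairingMetric

theorem stmt4_general (V : Type*) [AddCommGroup V] [Module ℝ V] [FiniteDimensional ℝ V]
    (E : Submodule ℝ (V × Dual ℝ V))
    (U U' : Submodule ℝ V)
    (hU : U = Submodule.map (LinearMap.fst ℝ V (Dual ℝ V)) E)
    (hU' : U' = Submodule.map (LinearMap.fst ℝ V (Dual ℝ V)) (gOrth E)) :
    finrank ℝ E = finrank ℝ U + (finrank ℝ V - finrank ℝ U') ∧
    finrank ℝ (gOrth E) = finrank ℝ U' + (finrank ℝ V - finrank ℝ U) ∧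
    finrank ℝ E = finrank ℝ U + finrank ℝ U'.dualAnnihilator ∧
    finrank ℝ (gOrth E) = finrank ℝ U' + finrank ℝ U.dualAnnihilator := by
  have hE : finrank ℝ E = finrank ℝ U + finrank ℝ U'.dualAnnihilator := by
    have := finrank_gOrth (gOrth E)
    rwa [gOrth_gOrth, ← hU, ← hU'] at this
  have hE' : finrank ℝ (gOrth E) = finrank ℝ U' + finrank ℝ U.dualAnnihilator := by
    rw [finrank_gOrth, ← hU, ← hU']
  have hU_ann := Subspace.finrank_add_finrank_dualAnnihilator_eq U
  have hU'_ann := Subspace.finrank_add_finrank_dualAnnihilator_eq U'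
  refine ⟨?_, ?_, hE, hE'⟩ <;> omega

/-- For an isotropic `E` with `U = pr_V E` and `U′ = pr_V E^⊥`:
`dim E = dim U + (dim V - dim U′)`, `dim E^⊥ = dim U′ + (dim V - dim U)`, and
equivalently with `dim ann U′`, `dim ann U` (annihilators in `V*`). -/
theorem stmt4 (V : Type*) [AddCommGroup V] [Module ℝ V] [FiniteDimensional ℝ V]
    (E : Submodule ℝ (V × Dual ℝ V))
    (hiso : ∀ p ∈ E, ∀ q ∈ E, bigG V p q = 0)
    (U U' : Submodule ℝ V)
    (hU : U = Submodule.map (LinearMap.fst ℝ V (Dual ℝ V)) E)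
    (hU' : U' = Submodule.map (LinearMap.fst ℝ V (Dual ℝ V)) (gOrth E)) :
    finrank ℝ E = finrank ℝ U + (finrank ℝ V - finrank ℝ U') ∧
    finrank ℝ (gOrth E) = finrank ℝ U' + (finrank ℝ V - finrank ℝ U) ∧
    finrank ℝ E = finrank ℝ U + finrank ℝ U'.dualAnnihilator ∧
    finrank ℝ (gOrth E) = finrank ℝ U' + finrank ℝ U.dualAnnihilator :=
  stmt4_general V E U U' hU hU'
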